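/- If G = KL is a tiling of a group G by a finite tile K with tiling centers L, and K' is another finite subset of G, then the union of those translates Kl (l ∈ L) that meet both K' and its complement is contained in K · ∂_{K⁻¹}K', which is contained in ∂_{KK⁻¹}K'. -/
import Mathlib


open scoped Pointwise symmDiff

/-- If `G = KL` is a tiling by a finite tile `K`, and `K'` is another finite subset,
then the union of those translates `Kl` (`l ∈ L`) meeting both `K'` and its complement
is contained in `K * ∂_{K⁻¹}K'`, which in turn is contained in `∂_{KK⁻¹}K'`,
where `∂_S A = SA ∩ S(Aᶜ)`. -/
theorem translates_meeting_both_subset_boundary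
    {G : Type*} [Group G] (K L K' : Set G) (hKfin : K.Finite) (hK'fin : K'.Finite)
    (htile : ∀ x : G, ∃! p : K × L, (p.1 : G) * (p.2 : G) = x) :
    (⋃ l ∈ {l ∈ L | (K * {l} ∩ K').Nonempty ∧ (K * {l} ∩ K'ᶜ).Nonempty}, K * {l}) ⊆
        K * ((K⁻¹ * K') ∩ (K⁻¹ * K'ᶜ)) ∧
      K * ((K⁻¹ * K') ∩ (K⁻¹ * K'ᶜ)) ⊆ ((K * K⁻¹) * K') ∩ ((K * K⁻¹) * K'ᶜ) := by
  constructor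
  · intro x hx
    simp only [Set.mem_iUnion, Set.mem_setOf_eq] at hx
    obtain ⟨l, ⟨hlL, ⟨a, ⟨k₁, hk₁, l₁, rfl, rfl⟩, haK'⟩, ⟨b, ⟨k₂, hk₂, l₂, rfl, rfl⟩, hbK'⟩⟩,
      k, hk, l₃, rfl, rfl⟩ := hx
    exact ⟨k, hk, l₃,
      ⟨⟨k₁⁻¹, Set.inv_mem_inv.2 hk₁, k₁ * l₃, haK', by group⟩,
       ⟨k₂⁻¹, Set.inv_mem_inv.2 hk₂, k₂ * l₃, hbK', by group⟩⟩, rfl⟩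
  · intro x hx
    obtain ⟨k, hk, w, ⟨⟨k₁, hk₁, c, hc, h1⟩, ⟨k₂, hk₂, c₂, hc₂, h2⟩⟩, hx⟩ := hx
    refine ⟨⟨k * k₁, ⟨k, hk, k₁, hk₁, rfl⟩, c, hc, ?_⟩,
            ⟨k * k₂, ⟨k, hk, k₂, hk₂, rfl⟩, c₂, hc₂, ?_⟩⟩
    · show k * k₁ * c = x
      rw [← hx]; show k * k₁ * c = k * w; rw [← h1]; group
    · show k * k₂ * c₂ = x
      rw [← hx]; show k * k₂ * c₂ = k * w; rw [← h2]; group
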